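/- Let r(ξ) be the 3×3 antisymmetric matrix with rows (0, −ξ₃, ξ₂), (ξ₃, 0, −ξ₁), (−ξ₂, ξ₁, 0) (so r(ξ)v = ξ × v). Then for every nonzero ξ ∈ ℝ³, the 4×3 matrix b(ξ) with upper 3×3 block r(ξ)μ₀^{−1/2} and last row ξᵗ μ₀^{1/2} has rank 3, where μ₀ is any symmetric positive definite real 3×3 matrix. -/

import Mathlib

/-- The antisymmetric matrix `r(ξ)` of the cross product: `r(ξ) v = ξ × v`. -/
noncomputable def crossMat (ξ : Fin 3 → ℝ) : Matrix (Fin 3) (Fin 3) ℝ :=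
  !![0, -ξ 2, ξ 1; ξ 2, 0, -ξ 0; -ξ 1, ξ 0, 0]

/-- The `4×3` symbol `b(ξ)` with upper block `r(ξ) μ₀^{-1/2}` and last row `ξᵗ μ₀^{1/2}`. -/
noncomputable def maxwellSymbol (m minv : Matrix (Fin 3) (Fin 3) ℝ) (ξ : Fin 3 → ℝ) :
    Matrix (Fin 4) (Fin 3) ℝ :=
  Matrix.of fun i j =>
    if h : (i : ℕ) < 3 then (crossMat ξ * minv) ⟨(i : ℕ), h⟩ j else (m.mulVec ξ) j

/-!
If `b(ξ) v = 0`, the upper block says `ξ × (minv v) = 0`, so `minv v = c ξ` and hence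
`v = c (m ξ)`; the last row then says `c |m ξ|² = 0`, and `m ξ ≠ 0` because `m` is invertible.
So `b(ξ)` is injective, i.e. has full column rank.
-/

open Matrix

lemma eq_smul_of_cross_eq_zero {R : Type*} [Field R] [LinearOrder R] [IsStrictOrderedRing R]
    {u w : Fin 3 → R} (hu : u ≠ 0) (h : u ⨯₃ w = 0) : w = ((u ⬝ᵥ w) / (u ⬝ᵥ u)) • u := by
  have huu : u ⬝ᵥ u ≠ 0 := dotProduct_self_eq_zero.not.2 hu
  have htriple : (u ⬝ᵥ w) • u = (u ⬝ᵥ u) • w :=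
    sub_eq_zero.1 (by rw [← cross_cross_eq_smul_sub_smul', h, map_zero])
  rw [div_eq_inv_mul, mul_smul, htriple, smul_smul, inv_mul_cancel₀ huu, one_smul]

lemma Matrix.rank_eq_card_of_mulVec_injective {m n R : Type*} [Fintype m] [Fintype n]
    [CommRing R] [StrongRankCondition R] {A : Matrix m n R} (hA : Function.Injective A.mulVec) :
    A.rank = Fintype.card n := by
  rw [rank, LinearMap.finrank_range_of_inj hA, Module.finrank_pi]

lemma crossMat_mulVec (ξ w : Fin 3 → ℝ) : crossMat ξ *ᵥ w = ξ ⨯₃ w := by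
  ext i
  fin_cases i <;>
    simp [crossMat, cross_apply, mulVec, dotProduct, Fin.sum_univ_three] <;> ring

lemma maxwellSymbol_mulVec_castSucc (m minv : Matrix (Fin 3) (Fin 3) ℝ) (ξ v : Fin 3 → ℝ)
    (i : Fin 3) : (maxwellSymbol m minv ξ *ᵥ v) i.castSucc = (ξ ⨯₃ (minv *ᵥ v)) i := by
  rw [← crossMat_mulVec, mulVec_mulVec]
  simp [maxwellSymbol, mulVec, dotProduct]

lemma maxwellSymbol_mulVec_last (m minv : Matrix (Fin 3) (Fin 3) ℝ) (ξ v : Fin 3 → ℝ) :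
    (maxwellSymbol m minv ξ *ᵥ v) (Fin.last 3) = (m *ᵥ ξ) ⬝ᵥ v := by
  simp [maxwellSymbol, mulVec, dotProduct]

lemma maxwellSymbol_mulVec_eq_zero_iff (m minv : Matrix (Fin 3) (Fin 3) ℝ) (ξ v : Fin 3 → ℝ) :
    maxwellSymbol m minv ξ *ᵥ v = 0 ↔ ξ ⨯₃ (minv *ᵥ v) = 0 ∧ (m *ᵥ ξ) ⬝ᵥ v = 0 := by
  simp only [funext_iff, Fin.forall_fin_succ', maxwellSymbol_mulVec_castSucc,
    maxwellSymbol_mulVec_last, Pi.zero_apply]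

lemma maxwellSymbol_mulVec_injective {m minv : Matrix (Fin 3) (Fin 3) ℝ} (hminv : m * minv = 1)
    {ξ : Fin 3 → ℝ} (hξ : ξ ≠ 0) : Function.Injective (maxwellSymbol m minv ξ).mulVec := by
  rw [← coe_mulVecLin, ← LinearMap.ker_eq_bot, ker_mulVecLin_eq_bot_iff]
  intro v hv
  obtain ⟨hcross, hdot⟩ := (maxwellSymbol_mulVec_eq_zero_iff m minv ξ v).1 hv
  set c := (ξ ⬝ᵥ minv *ᵥ v) / (ξ ⬝ᵥ ξ)
  have hv_eq : v = c • (m *ᵥ ξ) := by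
    rw [← one_mulVec v, ← hminv, ← mulVec_mulVec, eq_smul_of_cross_eq_zero hξ hcross, mulVec_smul]
  have hmξ : m *ᵥ ξ ≠ 0 := by
    intro h
    apply hξ
    rw [← one_mulVec ξ, ← mul_eq_one_comm.1 hminv, ← mulVec_mulVec, h, mulVec_zero]
  rw [hv_eq, dotProduct_smul, smul_eq_mul, mul_eq_zero, dotProduct_self_eq_zero] at hdot
  rw [hv_eq, hdot.resolve_right hmξ, zero_smul]

theorem maxwellSymbol_rank_general (m minv : Matrix (Fin 3) (Fin 3) ℝ)
    (hminv : m * minv = 1)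
    (ξ : Fin 3 → ℝ) (hξ : ξ ≠ 0) :
    (maxwellSymbol m minv ξ).rank = 3 := by
  rw [rank_eq_card_of_mulVec_injective (maxwellSymbol_mulVec_injective hminv hξ), Fintype.card_fin]

/-- For every nonzero `ξ ∈ ℝ³`, the symbol `b(ξ)` has rank `3`.  Here `m = μ₀^{1/2}` is the
positive square root of the symmetric positive definite matrix `μ₀` and `minv = μ₀^{-1/2}`. -/
theorem maxwellSymbol_rank (μ₀ m minv : Matrix (Fin 3) (Fin 3) ℝ)
    (hμsym : μ₀.IsSymm) (hμpos : μ₀.PosDef)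
    (hm : m.PosDef) (hmsq : m * m = μ₀)
    (hminv : m * minv = 1) (hminv' : minv * m = 1)
    (ξ : Fin 3 → ℝ) (hξ : ξ ≠ 0) :
    (maxwellSymbol m minv ξ).rank = 3 :=
  maxwellSymbol_rank_general m minv hminv ξ hξ
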